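/- The characteristic polynomial of the finite cobweb subposet P_n is given explicitly by χ_n(t) = t^n + Σ_{k=1}^n (-1)^k F_k · (∏_{i=1}^{k-1} (F_i - 1)) · t^{n-k}. -/

import Mathlib

/-- The cobweb order relation on pairs `(j, s)` where `s` is the level:
`⟨j,s⟩ ≤ ⟨q,u⟩` iff `s < u` or (`s = u` and `j = q`). -/
def cobwebLE (p q : ℕ × ℕ) : Prop :=
  p.2 < q.2 ∨ (p.2 = q.2 ∧ p.1 = q.1)

/-- Vertices of the cobweb poset designated by `F`: pairs `(j, s)` with `1 ≤ j ≤ F s`. -/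
def CobwebVertex (F : ℕ → ℕ) : Type :=
  {p : ℕ × ℕ // 1 ≤ p.1 ∧ p.1 ≤ F p.2}

instance (F : ℕ → ℕ) : PartialOrder (CobwebVertex F) where
  le x y := cobwebLE x.val y.val
  le_refl x := Or.inr ⟨rfl, rfl⟩
  le_trans x y z hxy hyz := by
    rcases hxy with h | ⟨h1, h2⟩
    · rcases hyz with h' | ⟨h1', h2'⟩
      · exact Or.inl (h.trans h')
      · exact Or.inl (h1' ▸ h)
    · rcases hyz with h' | ⟨h1', h2'⟩
      · exact Or.inl (h1 ▸ h')
      · exact Or.inr ⟨h1.trans h1', h2.trans h2'⟩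
  le_antisymm x y hxy hyx := by
    rcases hxy with h | ⟨h1, h2⟩
    · rcases hyx with h' | ⟨h1', h2'⟩
      · exact absurd (h.trans h') (lt_irrefl _)
      · exact absurd (h1' ▸ h) (lt_irrefl _)
    · rcases hyx with h' | ⟨h1', h2'⟩
      · exact absurd (h1 ▸ h') (lt_irrefl _)
      · exact Subtype.ext (Prod.ext h2 h1)

/-- The rank of a vertex is its level. -/
def rank {F : ℕ → ℕ} (x : CobwebVertex F) : ℕ := x.val.2

/-!
Below a vertex `x` of rank `u ≥ 1` lie `x` itself and every vertex of rank `< u`, so the defining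
recursion of the Möbius function reads `μ(0̂, x) = -∑_{s<u} F_s μ_s` as soon as `μ(0̂, ·)` is known
to depend only on the rank. The closed form `μ_u = (-1)^u ∏_{i=1}^{u-1} (F_i - 1)` satisfies this
recursion, because `∑_{s<u} F_s μ_s = -μ_u` telescopes. Summing `μ_s t^{n-s}` over the `F_s`
vertices of each rank gives `χ_n`.
-/

namespace CobwebVertex

variable {F : ℕ → ℕ}

theorem le_iff_rank_lt_or_eq {x y : CobwebVertex F} : x ≤ y ↔ rank x < rank y ∨ x = y := by
  refine or_congr Iff.rfl ⟨fun ⟨h2, h1⟩ => Subtype.ext (Prod.ext h1 h2), ?_⟩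
  rintro rfl
  exact ⟨rfl, rfl⟩

theorem isBot_of_val_eq (hF0 : F 0 = 1) {zero : CobwebVertex F} (hzero : zero.val = (1, 0)) :
    IsBot zero := by
  intro z
  rw [le_iff_rank_lt_or_eq]
  rcases Nat.eq_zero_or_pos (rank z) with hz | hz
  · have hz1 : z.val.1 = 1 := by
      have hle := z.2.2
      rw [show z.val.2 = 0 from hz, hF0] at hle
      exact le_antisymm hle z.2.1
    exact Or.inr (Subtype.ext (hzero.trans (Prod.ext hz1 hz).symm))
  · exact Or.inl (by simpa [rank, hzero] using hz)

variable (F)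

def level (s : ℕ) : Finset (CobwebVertex F) :=
  (Finset.Icc 1 (F s)).attach.map
    ⟨fun j => ⟨(j.val, s), Finset.mem_Icc.mp j.2⟩,
     fun _ _ h => Subtype.ext (congrArg (fun x : CobwebVertex F => x.val.1) h)⟩

theorem mem_level {s : ℕ} {x : CobwebVertex F} : x ∈ level F s ↔ rank x = s := by
  simp only [level, Finset.mem_map, Finset.mem_attach, true_and]
  constructor
  · rintro ⟨j, rfl⟩
    rfl
  · intro hx
    exact ⟨⟨x.val.1, Finset.mem_Icc.mpr ⟨x.2.1, hx ▸ x.2.2⟩⟩, Subtype.ext (Prod.ext rfl hx.symm)⟩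

theorem card_level (s : ℕ) : (level F s).card = F s := by
  simp [level]

theorem pairwiseDisjoint_level (s : Set ℕ) : s.PairwiseDisjoint (level F) :=
  fun _ _ _ _ hst => Finset.disjoint_left.mpr fun _ hs ht =>
    hst (((mem_level F).mp hs).symm.trans ((mem_level F).mp ht))

def rankLT (u : ℕ) : Finset (CobwebVertex F) :=
  (Finset.range u).disjiUnion (level F) (pairwiseDisjoint_level F _)

theorem mem_rankLT {u : ℕ} {x : CobwebVertex F} : x ∈ rankLT F u ↔ rank x < u := by
  simp [rankLT, mem_level, Finset.mem_disjiUnion]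

theorem sum_rankLT_comp_rank {M : Type*} [AddCommMonoid M] (u : ℕ) (f : ℕ → M) :
    ∑ x ∈ rankLT F u, f (rank x) = ∑ s ∈ Finset.range u, F s • f s := by
  rw [rankLT, Finset.sum_disjiUnion]
  refine Finset.sum_congr rfl fun s _ => ?_
  rw [Finset.sum_congr rfl fun x hx => congrArg f ((mem_level F).mp hx), Finset.sum_const,
    card_level]

variable {F}

theorem Iic_eq_insert_rankLT (x : CobwebVertex F) :
    Set.Iic x = insert x (rankLT F (rank x) : Set (CobwebVertex F)) := by
  ext z
  simp only [Set.mem_Iic, Set.mem_insert_iff, Finset.mem_coe, mem_rankLT, le_iff_rank_lt_or_eq]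
  tauto

end CobwebVertex

open CobwebVertex

def cobwebMobius (F : ℕ → ℕ) (k : ℕ) : ℤ :=
  (-1) ^ k * ∏ i ∈ Finset.Icc 1 (k - 1), ((F i : ℤ) - 1)

theorem cobwebMobius_succ (F : ℕ → ℕ) {u : ℕ} (hu : 1 ≤ u) :
    cobwebMobius F (u + 1) = -((F u : ℤ) - 1) * cobwebMobius F u := by
  obtain ⟨v, rfl⟩ := Nat.exists_eq_add_of_le' hu
  simp only [cobwebMobius, Nat.add_sub_cancel, Finset.prod_Icc_succ_top (Nat.le_add_left 1 v),
    pow_succ]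
  ring

theorem sum_range_mul_cobwebMobius (F : ℕ → ℕ) (hF0 : F 0 = 1) {u : ℕ} (hu : 1 ≤ u) :
    ∑ s ∈ Finset.range u, (F s : ℤ) * cobwebMobius F s = -cobwebMobius F u := by
  induction u, hu using Nat.le_induction with
  | base => simp [cobwebMobius, hF0]
  | succ u hu ih =>
    rw [Finset.sum_range_succ, ih, cobwebMobius_succ F hu]
    ring

theorem mobius_bot_eq_cobwebMobius {F : ℕ → ℕ} (hF0 : F 0 = 1)
    (μ : CobwebVertex F → CobwebVertex F → ℤ) {zero : CobwebVertex F} (hbot : IsBot zero)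
    (hzero : rank zero = 0) (hμ_refl : ∀ x, μ x x = 1)
    (hμ_sum : ∀ x y : CobwebVertex F, x < y → ∑ᶠ z ∈ Set.Icc x y, μ x z = 0)
    (x : CobwebVertex F) : μ zero x = cobwebMobius F (rank x) := by
  induction hx : rank x using Nat.strong_induction_on generalizing x with
  | _ u ih =>
    rcases Nat.eq_zero_or_pos u with rfl | hu
    · have : zero = x := (le_iff_rank_lt_or_eq.mp (hbot x)).resolve_left (by omega)
      simp [← this, hμ_refl, cobwebMobius]
    · have hlt : zero < x := (hbot x).lt_of_ne fun h => by rw [← h, hzero] at hx; omega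
      have hIcc : Set.Icc zero x = Set.Iic x := Set.ext fun z => and_iff_right (hbot z)
      have hbelow : ∑ z ∈ rankLT F u, μ zero z = -cobwebMobius F u := by
        rw [Finset.sum_congr rfl fun z hz => ih _ ((mem_rankLT F).mp hz) z rfl,
          sum_rankLT_comp_rank, ← sum_range_mul_cobwebMobius F hF0 hu]
        simp only [nsmul_eq_mul]
      have hsum := hμ_sum zero x hlt
      rw [hIcc, Iic_eq_insert_rankLT, finsum_mem_insert _ (by simp [mem_rankLT])
        (Finset.finite_toSet _), finsum_mem_coe_finset, hx, hbelow] at hsum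
      linarith

theorem cobweb_char_poly_explicit (F : ℕ → ℕ) (hF0 : F 0 = 1)
    (μ : CobwebVertex F → CobwebVertex F → ℤ)
    (zero : CobwebVertex F) (hzero : zero.val = (1, 0))
    (hμ_refl : ∀ x : CobwebVertex F, μ x x = 1)
    (hμ_sum : ∀ x y : CobwebVertex F, x < y → ∑ᶠ z ∈ Set.Icc x y, μ x z = 0)
    (n : ℕ) (t : ℤ) :
    ∑ᶠ x ∈ {x : CobwebVertex F | rank x ≤ n}, μ zero x * t ^ (n - rank x) =
      t ^ n + ∑ k ∈ Finset.Icc 1 n,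
        (-1 : ℤ) ^ k * (F k : ℤ) * (∏ i ∈ Finset.Icc 1 (k - 1), ((F i : ℤ) - 1)) * t ^ (n - k) := by
  have hμ := mobius_bot_eq_cobwebMobius hF0 μ (isBot_of_val_eq hF0 hzero)
    (congrArg Prod.snd hzero) hμ_refl hμ_sum
  have hset : {x : CobwebVertex F | rank x ≤ n} = rankLT F (n + 1) := by
    ext x
    simp [mem_rankLT]
  rw [hset, finsum_mem_coe_finset, Finset.sum_congr rfl fun x _ => by rw [hμ x],
    sum_rankLT_comp_rank F (n + 1) fun s => cobwebMobius F s * t ^ (n - s),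
    Finset.range_eq_Ico, Finset.sum_eq_sum_Ico_succ_bot n.add_one_pos, zero_add,
    Finset.Ico_add_one_right_eq_Icc]
  simp only [cobwebMobius, hF0, nsmul_eq_mul]
  congr 1
  · simp
  · refine Finset.sum_congr rfl fun k _ => ?_
    ring
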